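/- arXiv:1907.03672 — 2 statements merged into one kernel-verified Lean document; each statement's English description precedes it below -/
import Mathlib

section
/- The catenoid is the only minimal surface of revolution (Euler): if I ⊆ ℝ is an open interval and f : I → ℝ is a positive C² function satisfying the minimal-surface-of-revolution equation f(x)·f''(x) = 1 + (f'(x))² for all x ∈ I, then there exist constants c > 0 and b ∈ ℝ such that f(x) = c·cosh((x − b)/c) for all x ∈ I. -/
/-!
Set `s = √(1 + f'²)`. Since `s s' = f' f''`, the equation `f f'' = s²` says exactly that
`f / s` has derivative `f' (s² - f f'') / s³ = 0`, so `f = c s` for a constant `c > 0`.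
Substituting back gives `f'' = s / c`, i.e. `(arsinh f')' = 1 / c`, hence
`f' = sinh ((x - b) / c)` and `f = c √(1 + sinh²) = c cosh ((x - b) / c)`.
-/

open Real

theorem IsOpen.exists_eq_const_of_hasDerivAt_zero {I : Set ℝ} (hI : IsOpen I)
    (hI' : IsPreconnected I) {g : ℝ → ℝ} (hg : ∀ x ∈ I, HasDerivAt g 0 x) :
    ∃ d, ∀ x ∈ I, g x = d :=
  hI.exists_is_const_of_deriv_eq_zero hI'
    (fun x hx => (hg x hx).differentiableAt.differentiableWithinAt) (fun x hx => (hg x hx).deriv)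

theorem HasDerivAt.sqrt_one_add_sq {y : ℝ → ℝ} {y' x : ℝ} (hy : HasDerivAt y y' x) :
    HasDerivAt (fun t => √(1 + y t ^ 2)) (y x * y' / √(1 + y x ^ 2)) x := by
  convert ((hy.fun_pow 2).const_add 1).sqrt (by positivity) using 1
  field_simp
  ring

theorem exists_eq_mul_sqrt_one_add_sq_of_mul_eq_one_add_sq {I : Set ℝ} (hI : IsOpen I)
    (hI' : IsPreconnected I) {f f' f'' : ℝ → ℝ} (hf : ∀ x ∈ I, HasDerivAt f (f' x) x)
    (hf' : ∀ x ∈ I, HasDerivAt f' (f'' x) x) (hode : ∀ x ∈ I, f x * f'' x = 1 + f' x ^ 2) :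
    ∃ c, ∀ x ∈ I, f x = c * √(1 + f' x ^ 2) := by
  have hs : ∀ x, 0 < √(1 + f' x ^ 2) := fun x => sqrt_pos.2 (by positivity)
  have hs_sq : ∀ x, √(1 + f' x ^ 2) ^ 2 = 1 + f' x ^ 2 := fun x => sq_sqrt (by positivity)
  obtain ⟨c, hc⟩ := hI.exists_eq_const_of_hasDerivAt_zero hI'
    (g := fun x => f x / √(1 + f' x ^ 2)) fun x hx => by
      refine ((hf x hx).div (hf' x hx).sqrt_one_add_sq (hs x).ne').congr_deriv ?_
      have := (hs x).ne'
      field_simp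
      linear_combination f' x * hs_sq x - f' x * hode x hx
  refine ⟨c, fun x hx => ?_⟩
  rw [← hc x hx, div_mul_cancel₀ _ (hs x).ne']

theorem exists_eq_sinh_of_hasDerivAt_sqrt_one_add_sq_div {I : Set ℝ} (hI : IsOpen I)
    (hI' : IsPreconnected I) {c : ℝ} (hc : c ≠ 0) {y : ℝ → ℝ}
    (hy : ∀ x ∈ I, HasDerivAt y (√(1 + y x ^ 2) / c) x) :
    ∃ b, ∀ x ∈ I, y x = sinh ((x - b) / c) := by
  obtain ⟨d, hd⟩ := hI.exists_eq_const_of_hasDerivAt_zero hI'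
    (g := fun x => arsinh (y x) - x / c) fun x hx => by
      refine ((hy x hx).arsinh.sub ((hasDerivAt_id x).div_const c)).congr_deriv ?_
      have : √(1 + y x ^ 2) ≠ 0 := (sqrt_pos.2 (by positivity)).ne'
      rw [smul_eq_mul]
      field_simp
      ring
  refine ⟨-c * d, fun x hx => ?_⟩
  rw [← sinh_arsinh (y x), ← hd x hx]
  congr 1
  field_simp
  ring

/-- **The catenoid is the only minimal surface of revolution** (Euler): a positive C² solution of
`f·f'' = 1 + (f')²` on an open interval is a catenary `f(x) = c·cosh((x − b)/c)`. -/
theorem catenoid_unique_minimal_surface_of_revolution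
    (I : Set ℝ) (hI : IsOpen I) (hI' : I.OrdConnected)
    (f : ℝ → ℝ) (hf : ContDiffOn ℝ 2 f I)
    (hpos : ∀ x ∈ I, 0 < f x)
    (hode : ∀ x ∈ I, f x * deriv (deriv f) x = 1 + (deriv f x) ^ 2) :
    ∃ c > (0 : ℝ), ∃ b : ℝ, ∀ x ∈ I, f x = c * Real.cosh ((x - b) / c) := by
  rcases I.eq_empty_or_nonempty with rfl | ⟨x₀, hx₀⟩
  · exact ⟨1, one_pos, 0, by simp⟩
  have hf' : ∀ x ∈ I, HasDerivAt f (deriv f x) x := fun x hx =>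
    ((hf.contDiffAt (hI.mem_nhds hx)).differentiableAt two_ne_zero).hasDerivAt
  have hf'' : ∀ x ∈ I, HasDerivAt (deriv f) (deriv (deriv f) x) x := fun x hx =>
    (((hf.deriv_of_isOpen hI one_add_one_eq_two.le).contDiffAt (hI.mem_nhds hx)).differentiableAt
      one_ne_zero).hasDerivAt
  obtain ⟨c, hfc⟩ := exists_eq_mul_sqrt_one_add_sq_of_mul_eq_one_add_sq hI hI'.isPreconnected
    hf' hf'' hode
  have hs : ∀ x, 0 < √(1 + deriv f x ^ 2) := fun x => sqrt_pos.2 (by positivity)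
  have hc : 0 < c := pos_of_mul_pos_left (hfc x₀ hx₀ ▸ hpos x₀ hx₀) (hs x₀).le
  have hf''_eq : ∀ x ∈ I, deriv (deriv f) x = √(1 + deriv f x ^ 2) / c := fun x hx => by
    rw [eq_div_iff hc.ne']
    apply mul_left_cancel₀ (hs x).ne'
    calc √(1 + deriv f x ^ 2) * (deriv (deriv f) x * c) = f x * deriv (deriv f) x := by
          rw [hfc x hx]; ring
      _ = √(1 + deriv f x ^ 2) * √(1 + deriv f x ^ 2) := by
          rw [hode x hx, mul_self_sqrt (by positivity)]
  obtain ⟨b, hb⟩ := exists_eq_sinh_of_hasDerivAt_sqrt_one_add_sq_div hI hI'.isPreconnected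
    hc.ne' fun x hx => hf''_eq x hx ▸ hf'' x hx
  refine ⟨c, hc, b, fun x hx => ?_⟩
  rw [hfc x hx, hb x hx, ← cosh_sq', sqrt_sq (cosh_pos _).le]
end

section
/- Area growth of the stable minimal complex curves z ↦ (z, z^m): for every integer m ≥ 1, let Σ_m = {(z, z^m) : z ∈ ℂ} ⊆ ℂ² ≅ ℝ⁴. Then for every r ≥ √2, the 2-dimensional Hausdorff measure of Σ_m intersected with the closed Euclidean ball of radius r centered at the origin satisfies ℋ²(Σ_m ∩ B̄_r) ≥ (π/2)·m·r². In particular, there is no uniform quadratic area bound for complex curves in ℝ⁴ that are topologically planes. -/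
/-!
The projection `(z, w) ↦ w` of `ℝ⁴ ≅ ℂ²` is 1-Lipschitz, so it does not increase `ℋ²`, and on
`ℝ²` the measure `ℋ²` is Lebesgue measure. Over a set `D ⊆ ℂ \ {0}` the curve `Σ_m` splits into
the `m` disjoint measurable sheets `{(ζ w^{1/m}, w) : w ∈ D}`, one for each `m`-th root of unity
`ζ`, each of which projects onto `D`; hence the part of `Σ_m` over `D` has area at least
`m · vol D`. Take `D` the disc `|w| ≤ t = r/√2`: since `t ≥ 1`, `|zᵐ| ≤ t` forces `|z| ≤ t`, so
this part of `Σ_m` lies in `B̄_r`.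
-/

open MeasureTheory Real

/-- The complex curve `Σ_m = {(z, zᵐ) : z ∈ ℂ}`, viewed as a subset of Euclidean `ℝ⁴ ≅ ℂ²` via
`(z, w) ↦ (Re z, Im z, Re w, Im w)`. -/
def SigmaCurve (m : ℕ) : Set (EuclideanSpace ℝ (Fin 4)) :=
  {p | ∃ z : ℂ, p = (WithLp.equiv 2 (Fin 4 → ℝ)).symm ![z.re, z.im, (z ^ m).re, (z ^ m).im]}

open Metric Set Polynomial

noncomputable def graphMap (f : ℂ → ℂ) (z : ℂ) : EuclideanSpace ℝ (Fin 4) :=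
  (WithLp.equiv 2 (Fin 4 → ℝ)).symm ![z.re, z.im, (f z).re, (f z).im]

lemma graphMap_injective (f : ℂ → ℂ) : Function.Injective (graphMap f) := by
  intro z w h
  have h0 := congrArg (· 0) h
  have h1 := congrArg (· 1) h
  exact Complex.ext h0 h1

lemma continuous_graphMap {f : ℂ → ℂ} (hf : Continuous f) : Continuous (graphMap f) := by
  refine (PiLp.continuous_toLp 2 _).comp (continuous_pi fun i => ?_)
  fin_cases i <;> simp <;> fun_prop

lemma norm_graphMap_sq (f : ℂ → ℂ) (z : ℂ) : ‖graphMap f z‖ ^ 2 = ‖z‖ ^ 2 + ‖f z‖ ^ 2 := by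
  simp [graphMap, EuclideanSpace.norm_sq_eq, Fin.sum_univ_four, Complex.sq_norm,
    Complex.normSq_apply]
  ring

lemma graphMap_mem_closedBall {f : ℂ → ℂ} {z : ℂ} {t : ℝ} (hz : ‖z‖ ≤ t) (hfz : ‖f z‖ ≤ t) :
    graphMap f z ∈ closedBall 0 (√2 * t) := by
  have ht : 0 ≤ t := (norm_nonneg z).trans hz
  rw [mem_closedBall_zero_iff, ← sq_le_sq₀ (norm_nonneg _) (by positivity), norm_graphMap_sq,
    mul_pow, sq_sqrt zero_le_two]
  nlinarith [norm_nonneg z, norm_nonneg (f z)]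

noncomputable def lastTwoCoords (p : EuclideanSpace ℝ (Fin 4)) : ℝ × ℝ := (p 2, p 3)

lemma lipschitzWith_lastTwoCoords : LipschitzWith 1 lastTwoCoords := by
  have h := PiLp.lipschitzWith_ofLp 2 (fun _ : Fin 4 => ℝ)
  have h23 := ((LipschitzWith.eval 2).comp h).prodMk ((LipschitzWith.eval 3).comp h)
  rwa [mul_one, max_self] at h23

lemma lastTwoCoords_graphMap (f : ℂ → ℂ) (z : ℂ) :
    lastTwoCoords (graphMap f z) = Complex.equivRealProd (f z) := rfl

lemma volume_image_le_hausdorffMeasure_graphMap (f : ℂ → ℂ) (S : Set ℂ) :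
    volume (f '' S) ≤ μH[2] (graphMap f '' S) :=
  calc volume (f '' S)
      = volume (Complex.measurableEquivRealProd '' (f '' S)) := by
        rw [MeasurableEquiv.image_eq_preimage_symm,
          Complex.volume_preserving_equiv_real_prod.symm.measure_preimage_equiv]
    _ = μH[2] (lastTwoCoords '' (graphMap f '' S)) := by
        simp only [hausdorffMeasure_prod_real, image_image, lastTwoCoords_graphMap]
        rfl
    _ ≤ μH[2] (graphMap f '' S) := by
        simpa using lipschitzWith_lastTwoCoords.hausdorffMeasure_image_le zero_le_two _

lemma sum_volume_image_le_hausdorffMeasure_graphMap {f : ℂ → ℂ} (hf : Continuous f) {ι : Type*}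
    (s : Finset ι) {S : ι → Set ℂ} (hS : ∀ i ∈ s, MeasurableSet (S i))
    (hdisj : (s : Set ι).PairwiseDisjoint S) :
    ∑ i ∈ s, volume (f '' S i) ≤ μH[2] (graphMap f '' ⋃ i ∈ s, S i) := by
  rw [image_iUnion₂, measure_biUnion_finset]
  · exact Finset.sum_le_sum fun i _ => volume_image_le_hausdorffMeasure_graphMap f (S i)
  · exact fun i hi j hj hij => (disjoint_image_iff (graphMap_injective f)).2 (hdisj hi hj hij)
  · exact fun i hi => (hS i hi).image_of_continuousOn_injOn (continuous_graphMap hf).continuousOn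
      (graphMap_injective f).injOn

noncomputable def rootBranch (m : ℕ) (ζ w : ℂ) : ℂ := ζ * w ^ (m⁻¹ : ℂ)

lemma rootBranch_pow {m : ℕ} (hm : m ≠ 0) {ζ : ℂ} (hζ : ζ ^ m = 1) (w : ℂ) :
    rootBranch m ζ w ^ m = w := by
  rw [rootBranch, mul_pow, hζ, one_mul, Complex.cpow_nat_inv_pow w hm]

lemma rootBranch_injective {m : ℕ} (hm : m ≠ 0) {ζ : ℂ} (hζ : ζ ^ m = 1) :
    Function.Injective (rootBranch m ζ) :=
  Function.LeftInverse.injective (g := (· ^ m)) (rootBranch_pow hm hζ)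

lemma pairwiseDisjoint_image_rootBranch {m : ℕ} (hm : m ≠ 0) {D : Set ℂ} (hD : 0 ∉ D) :
    (nthRootsFinset m (1 : ℂ) : Set ℂ).PairwiseDisjoint (fun ζ => rootBranch m ζ '' D) := by
  have hm0 : 0 < m := Nat.pos_of_ne_zero hm
  rintro ζ hζ η hη hne
  simp only [Finset.mem_coe, mem_nthRootsFinset hm0] at hζ hη
  refine disjoint_left.2 ?_
  rintro _ ⟨w, hw, rfl⟩ ⟨v, hv, hvw⟩
  have hvw' : v = w := by rw [← rootBranch_pow hm hη v, hvw, rootBranch_pow hm hζ w]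
  subst hvw'
  have hroot : v ^ (m⁻¹ : ℂ) ≠ 0 := fun h0 => hD <| by
    rwa [← Complex.cpow_nat_inv_pow v hm, h0, zero_pow hm] at hv
  exact hne (mul_right_cancel₀ hroot hvw).symm

lemma natCast_mul_volume_le_hausdorffMeasure_graph_pow (m : ℕ) {D : Set ℂ}
    (hD : MeasurableSet D) :
    m * volume D ≤ μH[2] (graphMap (· ^ m) '' ((· ^ m) ⁻¹' D)) := by
  rcases eq_or_ne m 0 with rfl | hm
  · simp
  have hm0 : 0 < m := Nat.pos_of_ne_zero hm
  obtain ⟨ζ, hζ⟩ : ∃ ζ : ℂ, IsPrimitiveRoot ζ m := ⟨_, Complex.isPrimitiveRoot_exp m hm⟩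
  set D' := D \ {0}
  have hroots : ∀ η ∈ nthRootsFinset m (1 : ℂ), η ^ m = 1 := fun η hη =>
    (mem_nthRootsFinset hm0 1).1 hη
  have himage : ∀ η ∈ nthRootsFinset m (1 : ℂ), (· ^ m) '' (rootBranch m η '' D') = D' :=
    fun η hη => by
      rw [image_image]
      exact (image_congr fun w _ => rootBranch_pow hm (hroots η hη) w).trans (image_id' D')
  have hmeas : ∀ η ∈ nthRootsFinset m (1 : ℂ), MeasurableSet (rootBranch m η '' D') :=
    fun η hη => (hD.diff (measurableSet_singleton 0)).image_of_measurable_injOn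
      (measurable_const.mul (measurable_id.pow_const _))
      (rootBranch_injective hm (hroots η hη)).injOn
  have hsub : (⋃ η ∈ nthRootsFinset m (1 : ℂ), rootBranch m η '' D') ⊆ (· ^ m) ⁻¹' D := by
    simp only [iUnion_subset_iff]
    rintro η hη _ ⟨w, hw, rfl⟩
    rw [mem_preimage, rootBranch_pow hm (hroots η hη)]
    exact hw.1
  calc (m : ENNReal) * volume D
      = ∑ η ∈ nthRootsFinset m (1 : ℂ), volume ((· ^ m) '' (rootBranch m η '' D')) := by
        rw [Finset.sum_congr rfl fun η hη => by rw [himage η hη], Finset.sum_const,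
          hζ.card_nthRootsFinset, nsmul_eq_mul, measure_sdiff_null (measure_singleton 0)]
    _ ≤ μH[2] (graphMap (· ^ m) '' ⋃ η ∈ nthRootsFinset m (1 : ℂ), rootBranch m η '' D') :=
        sum_volume_image_le_hausdorffMeasure_graphMap (continuous_pow m) _ hmeas
          (pairwiseDisjoint_image_rootBranch hm (fun h => h.2 rfl))
    _ ≤ μH[2] (graphMap (· ^ m) '' ((· ^ m) ⁻¹' D)) := measure_mono (image_mono hsub)

lemma norm_le_of_norm_pow_le {m : ℕ} (hm : m ≠ 0) {t : ℝ} (ht : 1 ≤ t) {z : ℂ}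
    (h : ‖z ^ m‖ ≤ t) : ‖z‖ ≤ t := by
  rcases le_total ‖z‖ 1 with hz | hz
  · exact hz.trans ht
  · exact (le_self_pow₀ hz hm).trans ((norm_pow z m).symm ▸ h)

/-- **Area growth of the stable minimal complex curves `z ↦ (z, zᵐ)`**: for every `m ≥ 1` and
every `r ≥ √2`, the 2-dimensional Hausdorff measure of `Σ_m` inside the closed Euclidean ball of
radius `r` about the origin is at least `(π/2)·m·r²`. -/
theorem area_growth_of_complex_curves (m : ℕ) (hm : 1 ≤ m) (r : ℝ) (hr : Real.sqrt 2 ≤ r) :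
    ENNReal.ofReal (π / 2 * m * r ^ 2) ≤
      μH[2] (SigmaCurve m ∩ Metric.closedBall (0 : EuclideanSpace ℝ (Fin 4)) r) := by
  set t := r / √2
  have hsqrt2 : 0 < √2 := by positivity
  have hrt : r = √2 * t := by simp only [t]; field_simp
  have ht : 1 ≤ t := by rwa [le_div_iff₀ hsqrt2, one_mul]
  have hsub : graphMap (· ^ m) '' ((· ^ m) ⁻¹' closedBall 0 t) ⊆
      SigmaCurve m ∩ closedBall 0 r := by
    rintro _ ⟨z, hz, rfl⟩
    rw [mem_preimage, mem_closedBall_zero_iff] at hz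
    exact ⟨⟨z, rfl⟩, hrt ▸ graphMap_mem_closedBall (norm_le_of_norm_pow_le (by omega) ht hz) hz⟩
  have hvol : ENNReal.ofReal (π / 2 * m * r ^ 2) = m * volume (closedBall (0 : ℂ) t) := by
    rw [Complex.volume_closedBall, ← ENNReal.ofReal_pow (by positivity), ← ENNReal.ofReal_natCast,
      ← ENNReal.ofReal_coe_nnreal, NNReal.coe_real_pi, ← ENNReal.ofReal_mul (by positivity),
      ← ENNReal.ofReal_mul (by positivity), hrt, mul_pow, sq_sqrt zero_le_two]
    ring_nf
  calc ENNReal.ofReal (π / 2 * m * r ^ 2) = m * volume (closedBall (0 : ℂ) t) := hvol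
    _ ≤ μH[2] (graphMap (· ^ m) '' ((· ^ m) ⁻¹' closedBall 0 t)) :=
        natCast_mul_volume_le_hausdorffMeasure_graph_pow m measurableSet_closedBall
    _ ≤ μH[2] (SigmaCurve m ∩ closedBall 0 r) := measure_mono hsub
end
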